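/- For each b ∈ ℂ, the vector space ℂ[h] carries an sl₂(ℂ)-module structure M'_b in which h acts as multiplication by h, e = e_{1,2} acts by (e·f)(h) = f(h-1), and f = e_{2,1} acts by (f·g)(h) = -(h+b+1)(h-b)·g(h+1). In particular [e,f]·g = 2h·g for all g ∈ ℂ[h]. -/

import Mathlib

/-!
`H` is multiplication by `X` and `E`, `F` are the shifts `X ↦ X ∓ 1` (the latter twisted by
`r = -(X + b + 1)(X - b)`). Commuting `X` past a substitution `X ↦ q` costs a factor `X - q`,
which gives `[H, E] = E` and `[H, F] = -F`. In `[E, F]` the two shifts cancel and what remains is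
multiplication by `r(X - 1) - r`, which equals `2X`.
-/

open Polynomial

section

variable {R : Type*} [CommRing R]

theorem X_mul_comp_sub_comp_X_mul (p q : R[X]) :
    X * p.comp q - (X * p).comp q = (X - q) * p.comp q := by
  rw [mul_comp, X_comp]
  ring

theorem comp_X_add_one_comp_X_sub_one (p : R[X]) : (p.comp (X + 1)).comp (X - 1) = p := by
  rw [comp_assoc, add_comp, X_comp, one_comp, sub_add_cancel, comp_X]

theorem comp_X_sub_one_comp_X_add_one (p : R[X]) : (p.comp (X - 1)).comp (X + 1) = p := by
  rw [comp_assoc, sub_comp, X_comp, one_comp, add_sub_cancel_right, comp_X]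

theorem mul_comp_X_add_one_comp_X_sub_one_sub (r g : R[X]) :
    (r * g.comp (X + 1)).comp (X - 1) - r * (g.comp (X - 1)).comp (X + 1) =
      (r.comp (X - 1) - r) * g := by
  rw [mul_comp, comp_X_add_one_comp_X_sub_one, comp_X_sub_one_comp_X_add_one]
  ring

theorem neg_mul_comp_X_sub_one_sub (b : R) :
    (-((X + C b + 1) * (X - C b))).comp (X - 1) - -((X + C b + 1) * (X - C b)) = 2 * X := by
  simp only [neg_comp, mul_comp, add_comp, sub_comp, X_comp, C_comp, one_comp]
  ring

end

/-- For each `b ∈ ℂ`, the operators on `ℂ[h]` given by `h·f = hf`,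
`e·f = f(h-1)`, `f·g = -(h+b+1)(h-b)g(h+1)` satisfy the `sl₂` bracket relations
`[h,e] = e`, `[h,f] = -f` and, in particular, `[e,f]·g = 2h·g`; i.e. they define
an `sl₂(ℂ)`-module structure `M'_b` on `ℂ[h]`. -/
theorem Mb'_is_sl2_module (b : ℂ) :
    let E : ℂ[X] → ℂ[X] := fun f => f.comp (X - 1)
    let F : ℂ[X] → ℂ[X] := fun g => -((X + C b + 1) * (X - C b)) * g.comp (X + 1)
    let H : ℂ[X] → ℂ[X] := fun f => X * f
    (∀ g : ℂ[X], H (E g) - E (H g) = E g) ∧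
    (∀ g : ℂ[X], H (F g) - F (H g) = -(F g)) ∧
    (∀ g : ℂ[X], E (F g) - F (E g) = 2 * (H g)) := by
  dsimp only
  refine ⟨fun g => ?_, fun g => ?_, fun g => ?_⟩
  · rw [X_mul_comp_sub_comp_X_mul, sub_sub_cancel, one_mul]
  · linear_combination (-((X + C b + 1) * (X - C b))) * X_mul_comp_sub_comp_X_mul g (X + 1)
  · rw [mul_comp_X_add_one_comp_X_sub_one_sub, neg_mul_comp_X_sub_one_sub]
    ring
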